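/- Let Θ and σ be d×d real matrices, b, r₀ ∈ ℝ^d, X : [0,1] → ℝ^d continuous with X(0) = 0, and r : [0,1] → ℝ^d continuous with r(t) = r₀ + ∫₀ᵗ Θ(b − r(s)) ds + σX(t) for all t ∈ [0,1]. Set C := sup_{v∈[0,1]} ‖Θ(b − r(v))‖. Then for every integer N ≥ 1, with t_k := k/N, Δr_k := r(t_{k+1}) − r(t_k), and ΔX_k := X(t_{k+1}) − X(t_k), we have ‖(1/N)∑_{k=0}^{N−1} Δr_k Δr_kᵀ − σ·((1/N)∑_{k=0}^{N−1} ΔX_k ΔX_kᵀ)·σᵀ‖ ≤ C²/N² + (2‖σ‖C/N²)·∑_{k=0}^{N−1} ‖ΔX_k‖. -/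

import Mathlib

open Matrix intervalIntegral
open scoped Matrix.Norms.L2Operator

/-- The rank-one matrix `x yᵀ` built from two vectors of `ℝ^d`. -/
noncomputable def outer {d : ℕ} (x y : EuclideanSpace ℝ (Fin d)) : Matrix (Fin d) (Fin d) ℝ :=
  Matrix.vecMulVec (EuclideanSpace.equiv (Fin d) ℝ x) (EuclideanSpace.equiv (Fin d) ℝ y)

/-- A matrix acting on `ℝ^d` (with the Euclidean norm) by matrix-vector multiplication. -/
noncomputable def mvec {d : ℕ} (A : Matrix (Fin d) (Fin d) ℝ) (x : EuclideanSpace ℝ (Fin d)) :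
    EuclideanSpace ℝ (Fin d) := Matrix.toEuclideanLin A x

/-!
Over the cell `[t_k, t_{k+1}]` the equation gives `Δr_k = σ ΔX_k + D_k` with `D_k` the integral of
the drift over the cell, so `‖D_k‖ ≤ C / N`. Since `(σx)(σy)ᵀ = σ x yᵀ σᵀ`, the `k`-th summand of the
difference is `Δr_k Δr_kᵀ − s sᵀ` with `s = σ ΔX_k`, and the rank-one identity `‖x yᵀ‖ = ‖x‖ ‖y‖`
bounds it by `‖D_k‖² + 2 ‖D_k‖ ‖σ‖ ‖ΔX_k‖`.
-/

section Outer

variable {d : ℕ}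

theorem toEuclideanLin_outer (x y : EuclideanSpace ℝ (Fin d)) :
    toEuclideanLin (outer x y) = InnerProductSpace.rankOne ℝ x y := by
  rw [← LinearEquiv.eq_symm_apply, InnerProductSpace.symm_toEuclideanLin_rankOne]
  rfl

theorem norm_outer (x y : EuclideanSpace ℝ (Fin d)) : ‖outer x y‖ = ‖x‖ * ‖y‖ := by
  rw [l2_opNorm_def, ← InnerProductSpace.norm_rankOne (𝕜 := ℝ)]
  exact congrArg norm (congrArg LinearMap.toContinuousLinearMap (toEuclideanLin_outer x y))

theorem outer_sub_left (x y z : EuclideanSpace ℝ (Fin d)) :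
    outer (x - y) z = outer x z - outer y z := by
  simp [outer, sub_vecMulVec]

theorem outer_sub_right (x y z : EuclideanSpace ℝ (Fin d)) :
    outer x (y - z) = outer x y - outer x z := by
  simp [outer, vecMulVec_sub]

theorem outer_mvec_mvec (σ : Matrix (Fin d) (Fin d) ℝ) (x y : EuclideanSpace ℝ (Fin d)) :
    outer (mvec σ x) (mvec σ y) = σ * outer x y * σᵀ := by
  rw [outer, outer, mul_vecMulVec, vecMulVec_mul, vecMul_transpose]
  rfl

theorem mvec_sub (A : Matrix (Fin d) (Fin d) ℝ) (x y : EuclideanSpace ℝ (Fin d)) :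
    mvec A (x - y) = mvec A x - mvec A y :=
  map_sub _ x y

theorem norm_mvec_le (A : Matrix (Fin d) (Fin d) ℝ) (x : EuclideanSpace ℝ (Fin d)) :
    ‖mvec A x‖ ≤ ‖A‖ * ‖x‖ :=
  A.l2_opNorm_mulVec x

theorem norm_outer_self_sub_outer_self_le (y s : EuclideanSpace ℝ (Fin d)) :
    ‖outer y y - outer s s‖ ≤ ‖y - s‖ ^ 2 + 2 * ‖y - s‖ * ‖s‖ := by
  have hsplit : outer y y - outer s s = outer (y - s) y + outer s (y - s) := by
    rw [outer_sub_left, outer_sub_right]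
    abel
  have hy : ‖y‖ ≤ ‖y - s‖ + ‖s‖ := norm_le_norm_sub_add y s
  calc ‖outer y y - outer s s‖ ≤ ‖y - s‖ * ‖y‖ + ‖s‖ * ‖y - s‖ := by
        rw [hsplit, ← norm_outer, ← norm_outer]
        exact norm_add_le _ _
    _ ≤ ‖y - s‖ * (‖y - s‖ + ‖s‖) + ‖s‖ * ‖y - s‖ := by gcongr
    _ = ‖y - s‖ ^ 2 + 2 * ‖y - s‖ * ‖s‖ := by ring

open Finset in
theorem norm_smul_sum_outer_sub_mul_sum_outer_mul_le {N : ℕ} (σ : Matrix (Fin d) (Fin d) ℝ)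
    {y x : ℕ → EuclideanSpace ℝ (Fin d)} {c : ℝ}
    (h : ∀ k ∈ range N, ‖y k - mvec σ (x k)‖ ≤ c / N) :
    ‖(1 / (N:ℝ)) • ∑ k ∈ range N, outer (y k) (y k)
        - σ * ((1 / (N:ℝ)) • ∑ k ∈ range N, outer (x k) (x k)) * σᵀ‖
      ≤ c ^ 2 / (N:ℝ) ^ 2 + (2 * ‖σ‖ * c / (N:ℝ) ^ 2) * ∑ k ∈ range N, ‖x k‖ := by
  have hrw : (1 / (N:ℝ)) • ∑ k ∈ range N, outer (y k) (y k)
        - σ * ((1 / (N:ℝ)) • ∑ k ∈ range N, outer (x k) (x k)) * σᵀ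
      = (1 / (N:ℝ)) • ∑ k ∈ range N,
          (outer (y k) (y k) - outer (mvec σ (x k)) (mvec σ (x k))) := by
    simp only [outer_mvec_mvec, Matrix.mul_smul, Matrix.smul_mul, mul_sum, sum_mul, sum_sub_distrib,
      smul_sub]
  have hterm : ∀ k ∈ range N, ‖outer (y k) (y k) - outer (mvec σ (x k)) (mvec σ (x k))‖
      ≤ (c / N) ^ 2 + 2 * (c / N) * (‖σ‖ * ‖x k‖) := fun k hk =>
    (norm_outer_self_sub_outer_self_le _ _).trans <| by
      have hc : 0 ≤ c / N := (norm_nonneg _).trans (h k hk)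
      gcongr
      exacts [h k hk, h k hk, norm_mvec_le σ (x k)]
  rcases eq_or_ne N 0 with rfl | hN
  · simp
  calc _ = (1 / (N:ℝ)) * ‖∑ k ∈ range N,
          (outer (y k) (y k) - outer (mvec σ (x k)) (mvec σ (x k)))‖ := by
        rw [hrw, norm_smul, Real.norm_of_nonneg (by positivity)]
    _ ≤ (1 / (N:ℝ)) * ∑ k ∈ range N, ((c / N) ^ 2 + 2 * (c / N) * (‖σ‖ * ‖x k‖)) := by
        gcongr
        exact (norm_sum_le _ _).trans (sum_le_sum hterm)
    _ = _ := by
        rw [sum_add_distrib, sum_const, card_range, nsmul_eq_mul, ← mul_sum, ← mul_sum]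
        field_simp

end Outer

theorem IsCompact.le_ciSup_of_continuousOn {α : Type*} [TopologicalSpace α] {s : Set α}
    (hs : IsCompact s) {g : α → ℝ} (hg : ContinuousOn g s) {v : α} (hv : v ∈ s) :
    g v ≤ ⨆ w : s, g w :=
  le_ciSup (Set.image_eq_range g s ▸ hs.bddAbove_image hg) ⟨v, hv⟩

open Set in
theorem norm_sub_sub_sub_le_of_eq_add_integral_add {E : Type*} [NormedAddCommGroup E]
    [NormedSpace ℝ E] [CompleteSpace E] {F f g : ℝ → E} {c : E} {a b C s t : ℝ}
    (hF : ∀ t ∈ Icc a b, F t = c + (∫ u in a..t, f u) + g t) (hf : ContinuousOn f (Icc a b))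
    (hfC : ∀ v ∈ Icc a b, ‖f v‖ ≤ C) (hs : s ∈ Icc a b) (ht : t ∈ Icc a b) (hst : s ≤ t) :
    ‖F t - F s - (g t - g s)‖ ≤ C * (t - s) := by
  have hint : ∀ t ∈ Icc a b, IntervalIntegrable f MeasureTheory.volume a t := fun t ht =>
    (hf.mono (uIcc_subset_Icc (left_mem_Icc.2 (ht.1.trans ht.2)) ht)).intervalIntegrable
  have hdiff : F t - F s - (g t - g s) = ∫ u in s..t, f u := by
    rw [hF t ht, hF s hs, ← intervalIntegral.integral_interval_sub_left (hint t ht) (hint s hs)]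
    abel
  rw [hdiff, ← abs_of_nonneg (sub_nonneg.2 hst)]
  refine intervalIntegral.norm_integral_le_of_norm_le_const fun v hv => hfC v ?_
  rw [uIoc_of_le hst] at hv
  exact ⟨hs.1.trans hv.1.le, hv.2.trans ht.2⟩

theorem natCast_div_mem_Icc {k N : ℕ} (hk : k ≤ N) : (k : ℝ) / N ∈ Set.Icc 0 1 :=
  ⟨by positivity, div_le_one_of_le₀ (by exact_mod_cast hk) N.cast_nonneg⟩

theorem stmt_12_general (d : ℕ) (Θ σ : Matrix (Fin d) (Fin d) ℝ)
    (b r₀ : EuclideanSpace ℝ (Fin d)) (X r : ℝ → EuclideanSpace ℝ (Fin d))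
    (hrcont : ContinuousOn r (Set.Icc 0 1))
    (hr : ∀ t ∈ Set.Icc (0:ℝ) 1,
      r t = r₀ + (∫ s in (0:ℝ)..t, mvec Θ (b - r s)) + mvec σ (X t))
    (C : ℝ) (hC : C = ⨆ v : Set.Icc (0:ℝ) 1, ‖mvec Θ (b - r v)‖) :
    ∀ N : ℕ, 1 ≤ N →
      ‖(1 / (N:ℝ)) • ∑ k ∈ Finset.range N,
            outer (r (((k:ℝ) + 1) / N) - r ((k:ℝ) / N)) (r (((k:ℝ) + 1) / N) - r ((k:ℝ) / N))
          - σ * ((1 / (N:ℝ)) • ∑ k ∈ Finset.range N,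
              outer (X (((k:ℝ) + 1) / N) - X ((k:ℝ) / N))
                (X (((k:ℝ) + 1) / N) - X ((k:ℝ) / N))) * σᵀ‖
        ≤ C ^ 2 / (N:ℝ) ^ 2 +
          (2 * ‖σ‖ * C / (N:ℝ) ^ 2) *
            ∑ k ∈ Finset.range N, ‖X (((k:ℝ) + 1) / N) - X ((k:ℝ) / N)‖ := by
  intro N _
  have hdrift : ContinuousOn (fun s => mvec Θ (b - r s)) (Set.Icc 0 1) :=
    (toEuclideanLin Θ).continuous_of_finiteDimensional.comp_continuousOn
      (continuousOn_const.sub hrcont)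
  have hdriftC : ∀ v ∈ Set.Icc (0:ℝ) 1, ‖mvec Θ (b - r v)‖ ≤ C := fun v hv => by
    rw [hC]
    exact isCompact_Icc.le_ciSup_of_continuousOn hdrift.norm hv
  refine norm_smul_sum_outer_sub_mul_sum_outer_mul_le σ fun k hk => ?_
  have hkN : k + 1 ≤ N := Finset.mem_range.1 hk
  have hcell : C / N = C * (((k:ℝ) + 1) / N - k / N) := by ring
  rw [mvec_sub, hcell]
  exact norm_sub_sub_sub_le_of_eq_add_integral_add hr hdrift hdriftC
    (natCast_div_mem_Icc (by omega)) (by exact_mod_cast natCast_div_mem_Icc hkN)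
    (by gcongr; linarith)

/-- (Pathwise step of Lemma 5.5 of the paper.) If `r` solves the Vasicek-type
equation `r t = r₀ + ∫₀ᵗ Θ(b − r s) ds + σ X s` on `[0,1]` and
`C = sup_{v∈[0,1]} ‖Θ(b − r v)‖`, then for each `N ≥ 1` the realized quadratic variation of `r`
compares to that of `X` by
`‖(1/N)∑ Δr_k Δr_kᵀ − σ ((1/N)∑ ΔX_k ΔX_kᵀ) σᵀ‖ ≤ C²/N² + (2‖σ‖C/N²) ∑ ‖ΔX_k‖`. -/
theorem stmt_12 (d : ℕ) (Θ σ : Matrix (Fin d) (Fin d) ℝ)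
    (b r₀ : EuclideanSpace ℝ (Fin d)) (X r : ℝ → EuclideanSpace ℝ (Fin d))
    (hXcont : ContinuousOn X (Set.Icc 0 1)) (hX0 : X 0 = 0)
    (hrcont : ContinuousOn r (Set.Icc 0 1))
    (hr : ∀ t ∈ Set.Icc (0:ℝ) 1,
      r t = r₀ + (∫ s in (0:ℝ)..t, mvec Θ (b - r s)) + mvec σ (X t))
    (C : ℝ) (hC : C = ⨆ v : Set.Icc (0:ℝ) 1, ‖mvec Θ (b - r v)‖) :
    ∀ N : ℕ, 1 ≤ N →
      ‖(1 / (N:ℝ)) • ∑ k ∈ Finset.range N,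
            outer (r (((k:ℝ) + 1) / N) - r ((k:ℝ) / N)) (r (((k:ℝ) + 1) / N) - r ((k:ℝ) / N))
          - σ * ((1 / (N:ℝ)) • ∑ k ∈ Finset.range N,
              outer (X (((k:ℝ) + 1) / N) - X ((k:ℝ) / N))
                (X (((k:ℝ) + 1) / N) - X ((k:ℝ) / N))) * σᵀ‖
        ≤ C ^ 2 / (N:ℝ) ^ 2 +
          (2 * ‖σ‖ * C / (N:ℝ) ^ 2) *
            ∑ k ∈ Finset.range N, ‖X (((k:ℝ) + 1) / N) - X ((k:ℝ) / N)‖ :=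
  stmt_12_general d Θ σ b r₀ X r hrcont hr C hC
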